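/- arXiv:2105.01236 — 4 statements merged into one kernel-verified Lean document; each statement's English description precedes it below -/
import Mathlib

section
/- Let A1 = (L, l0, X, A, E, G, I) be a timed automaton and let Δ_G, Δ_I be vectors of nonnegative naturals indexed by the guards and invariants respectively. Let A2 be obtained from A1 by replacing each guard lower bound N_i by N_i − Δ_G[i] and each invariant upper bound M_i by M_i + Δ_I[i]. Then A2 timed-simulates A1, witnessed by the identity relation on states. -/
/-- The discrete structure of a timed automaton (locations, clocks, edges, actions, resets). -/
structure TAStruct (Act : Type) where
  Loc : Type
  Clock : Type
  Edge : Type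
  init : Loc
  src : Edge → Loc
  tgt : Edge → Loc
  act : Edge → Act
  reset : Edge → Clock → Bool

/-- Numeric bounds: guards are conjunctions of lower bounds `x ≥ n` on edges,
invariants conjunctions of upper bounds `x ≤ m` on locations. -/
structure Bounds {Act : Type} (S : TAStruct Act) where
  guard : S.Edge → S.Clock → ℕ
  inv : S.Loc → S.Clock → ℕ

/-- A state of the LTS semantics: a location and a clock valuation. -/
abbrev TAState {Act : Type} (S : TAStruct Act) := S.Loc × (S.Clock → ℝ)

def initState {Act : Type} (S : TAStruct Act) : TAState S := (S.init, fun _ => 0)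

/-- LTS semantics: delay transitions (respecting the invariant throughout) and
discrete transitions via edges whose guard holds and whose target invariant permits. -/
inductive Step {Act : Type} (S : TAStruct Act) (B : Bounds S) :
    TAState S → (ℝ ⊕ Act) → TAState S → Prop
  | delay (l : S.Loc) (u : S.Clock → ℝ) (d : ℝ) :
      0 ≤ d →
      (∀ d' : ℝ, 0 ≤ d' → d' ≤ d → ∀ x, u x + d' ≤ (B.inv l x : ℝ)) →
      Step S B (l, u) (Sum.inl d) (l, fun x => u x + d)
  | disc (e : S.Edge) (u : S.Clock → ℝ) :
      (∀ x, (B.guard e x : ℝ) ≤ u x) →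
      (∀ x, u x ≤ (B.inv (S.src e) x : ℝ)) →
      (∀ x, (if S.reset e x then 0 else u x) ≤ (B.inv (S.tgt e) x : ℝ)) →
      Step S B (S.src e, u) (Sum.inr (S.act e))
        (S.tgt e, fun x => if S.reset e x then 0 else u x)

/-- `InLang S B Obs σ τ`: there is an infinite run of the automaton whose subsequence of
observable actions is exactly `σ`, occurring at global times `τ`. -/
def InLang {Act : Type} (S : TAStruct Act) (B : Bounds S) (Obs : Act → Prop)
    (σ : ℕ → Act) (τ : ℕ → ℝ) : Prop :=
  ∃ (s : ℕ → TAState S) (lab : ℕ → ℝ ⊕ Act),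
    s 0 = initState S ∧
    (∀ i, Step S B (s i) (lab i) (s (i + 1))) ∧
    ∃ f : ℕ → ℕ, StrictMono f ∧
      (∀ i, lab (f i) = Sum.inr (σ i)) ∧
      (∀ i, Obs (σ i)) ∧
      (∀ j a, lab j = Sum.inr a → Obs a → ∃ i, f i = j) ∧
      (∀ i, τ i = ∑ k ∈ Finset.range (f i), Sum.elim id (fun _ => (0 : ℝ)) (lab k))

/-- The timed language: timed words `(σ, τ)` over observable actions, with `τ` strictly
increasing and divergent (progress condition). -/
def TALanguage {Act : Type} (S : TAStruct Act) (B : Bounds S) (Obs : Act → Prop) :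
    Set ((ℕ → Act) × (ℕ → ℝ)) :=
  {w | StrictMono w.2 ∧ (∀ t : ℝ, ∃ i, w.2 i > t) ∧ InLang S B Obs w.1 w.2}

/-- `sim` is a timed simulation of `(S1,B1)` by `(S2,B2)`: initial states related, delays
matched by equal delays, observable discrete transitions matched by the same action, and
unobservable ones matched by the same action or a silent step. -/
def IsTimedSim {Act : Type} (Obs : Act → Prop)
    (S1 : TAStruct Act) (B1 : Bounds S1) (S2 : TAStruct Act) (B2 : Bounds S2)
    (sim : TAState S1 → TAState S2 → Prop) : Prop :=
  sim (initState S1) (initState S2) ∧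
  (∀ s1 s2, sim s1 s2 → ∀ (d : ℝ) s1', Step S1 B1 s1 (Sum.inl d) s1' →
    ∃ s2', Step S2 B2 s2 (Sum.inl d) s2' ∧ sim s1' s2') ∧
  (∀ s1 s2, sim s1 s2 → ∀ (a : Act) s1', Step S1 B1 s1 (Sum.inr a) s1' →
    (Obs a → ∃ s2', Step S2 B2 s2 (Sum.inr a) s2' ∧ sim s1' s2') ∧
    (¬ Obs a → ∃ s2', (Step S2 B2 s2 (Sum.inr a) s2' ∨ s2' = s2) ∧ sim s1' s2'))

/-- `(S2,B2)` timed-simulates `(S1,B1)`. -/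
def TimedSim {Act : Type} (Obs : Act → Prop)
    (S1 : TAStruct Act) (B1 : Bounds S1) (S2 : TAStruct Act) (B2 : Bounds S2) : Prop :=
  ∃ sim, IsTimedSim Obs S1 B1 S2 B2 sim

/-- Abstraction rule R1: decrease guard lower bounds by `ΔG` (truncated subtraction)
and increase invariant upper bounds by `ΔI`. -/
def R1 {Act : Type} {S : TAStruct Act} (B : Bounds S)
    (ΔG : S.Edge → S.Clock → ℕ) (ΔI : S.Loc → S.Clock → ℕ) : Bounds S :=
  ⟨fun e x => B.guard e x - ΔG e x, fun l x => B.inv l x + ΔI l x⟩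

/-- R1 (decreasing guard lower bounds, increasing invariant upper bounds by
nonnegative amounts) yields an automaton that timed-simulates the original, witnessed by
the identity relation on states. -/
theorem r1_timedSim_identity {Act : Type} (Obs : Act → Prop)
    (S : TAStruct Act) (B : Bounds S)
    (ΔG : S.Edge → S.Clock → ℕ) (ΔI : S.Loc → S.Clock → ℕ) :
    IsTimedSim Obs S B S (R1 B ΔG ΔI) (fun s1 s2 => s1 = s2) := by
  have hstep : ∀ s l s', Step S B s l s' → Step S (R1 B ΔG ΔI) s l s' := by
    intro s l s' h
    cases h with
    | delay l u d hd hinv =>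
        exact Step.delay l u d hd (fun d' h1 h2 x => by
          have := hinv d' h1 h2 x
          simp only [R1, Nat.cast_add]
          have : (0:ℝ) ≤ ΔI l x := Nat.cast_nonneg _
          linarith [hinv d' h1 h2 x])
    | disc e u hg hi ht =>
        refine Step.disc e u (fun x => ?_) (fun x => ?_) (fun x => ?_)
        · have h1 : ((B.guard e x - ΔG e x : ℕ) : ℝ) ≤ (B.guard e x : ℝ) := by
            exact_mod_cast Nat.sub_le _ _
          exact h1.trans (hg x)
        · simp only [R1, Nat.cast_add]
          have : (0:ℝ) ≤ ΔI (S.src e) x := Nat.cast_nonneg _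
          linarith [hi x]
        · simp only [R1, Nat.cast_add]
          have : (0:ℝ) ≤ ΔI (S.tgt e) x := Nat.cast_nonneg _
          linarith [ht x]
  refine ⟨rfl, ?_, ?_⟩
  · rintro s1 s2 rfl d s1' h
    exact ⟨s1', hstep _ _ _ h, rfl⟩
  · rintro s1 s2 rfl a s1' h
    exact ⟨fun _ => ⟨s1', hstep _ _ _ h, rfl⟩, fun _ => ⟨s1', Or.inl (hstep _ _ _ h), rfl⟩⟩
end

section
/- If A2 = R1(A1, Δ_G, Δ_I) is obtained from A1 by weakening guards by Δ_G and invariants by Δ_I with Δ_G, Δ_I nonnegative, then L(A1) ⊆ L(A2), i.e., every timed word of A1 is a timed word of A2. -/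
lemma step_mono {Act : Type} (S : TAStruct Act) (B : Bounds S)
    (ΔG : S.Edge → S.Clock → ℕ) (ΔI : S.Loc → S.Clock → ℕ)
    {s s' : TAState S} {l : ℝ ⊕ Act} (h : Step S B s l s') :
    Step S (R1 B ΔG ΔI) s l s' := by
  cases h with
  | delay l u d hd hinv =>
      exact Step.delay l u d hd (fun d' h1 h2 x => le_trans (hinv d' h1 h2 x)
        (by exact_mod_cast Nat.le_add_right _ _))
  | disc e u hg hi1 hi2 =>
      refine Step.disc e u (fun x => le_trans ?_ (hg x))
        (fun x => le_trans (hi1 x) (by exact_mod_cast Nat.le_add_right _ _))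
        (fun x => le_trans (hi2 x) (by exact_mod_cast Nat.le_add_right _ _))
      exact_mod_cast Nat.sub_le _ _

/-- If A2 = R1(A1, ΔG, ΔI), then every timed word of A1 is a timed word of A2. -/
theorem r1_language_subset {Act : Type} (Obs : Act → Prop)
    (S : TAStruct Act) (B : Bounds S)
    (ΔG : S.Edge → S.Clock → ℕ) (ΔI : S.Loc → S.Clock → ℕ) :
    TALanguage S B Obs ⊆ TALanguage S (R1 B ΔG ΔI) Obs := by
  rintro ⟨σ, τ⟩ ⟨hmono, hdiv, s, lab, h0, hstep, hrest⟩
  exact ⟨hmono, hdiv, s, lab, h0, fun i => step_mono S B ΔG ΔI (hstep i), hrest⟩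
end

section
/- Let A1 and A2 be timed automata that agree on locations, initial location, clocks, actions, and edges, and differ only in the numeric lower bounds of guards and upper bounds of invariants. Define A3 with the same structure, whose guard lower bounds are the componentwise minimum of those of A1 and A2, and whose invariant upper bounds are the componentwise maximum of those of A1 and A2. Then L(A1) ∪ L(A2) ⊆ L(A3). -/

theorem step_mono_s3 {Act : Type} {S : TAStruct Act} {B B' : Bounds S}
    (hg : ∀ e x, B'.guard e x ≤ B.guard e x)
    (hi : ∀ l x, B.inv l x ≤ B'.inv l x)
    {s a s'} (h : Step S B s a s') : Step S B' s a s' := by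
  cases h with
  | delay l u d hd hinv =>
      exact Step.delay l u d hd (fun d' h0 h1 x =>
        le_trans (hinv d' h0 h1 x) (by exact_mod_cast hi l x))
  | disc e u hG hI hI' =>
      refine Step.disc e u (fun x => le_trans (by exact_mod_cast hg e x) (hG x))
        (fun x => le_trans (hI x) (by exact_mod_cast hi _ x))
        (fun x => le_trans (hI' x) (by exact_mod_cast hi _ x))

theorem lang_mono {Act : Type} (Obs : Act → Prop) {S : TAStruct Act} {B B' : Bounds S}
    (hg : ∀ e x, B'.guard e x ≤ B.guard e x)
    (hi : ∀ l x, B.inv l x ≤ B'.inv l x) :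
    TALanguage S B Obs ⊆ TALanguage S B' Obs := by
  rintro ⟨σ, τ⟩ ⟨h1, h2, s, lab, h3, h4, h5⟩
  exact ⟨h1, h2, s, lab, h3, fun i => step_mono_s3 hg hi (h4 i), h5⟩

/-- merge rule R2: with componentwise-minimum guard bounds and
componentwise-maximum invariant bounds, L(A1) ∪ L(A2) ⊆ L(A3). -/
theorem merge_language_union_subset {Act : Type} (Obs : Act → Prop)
    (S : TAStruct Act) (B1 B2 B3 : Bounds S)
    (hB3 : B3 = ⟨fun e x => min (B1.guard e x) (B2.guard e x),
                 fun l x => max (B1.inv l x) (B2.inv l x)⟩) :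
    TALanguage S B1 Obs ∪ TALanguage S B2 Obs ⊆ TALanguage S B3 Obs := by
  subst hB3
  apply Set.union_subset
  · exact lang_mono Obs (fun e x => min_le_left _ _) (fun l x => le_max_left _ _)
  · exact lang_mono Obs (fun e x => min_le_right _ _) (fun l x => le_max_right _ _)
end

section
/- Language inclusion induced by the abstraction rule R1 is monotone: if Δ_G ≤ Δ_G' and Δ_I ≤ Δ_I' componentwise (all nonnegative), then L(R1(A, Δ_G, Δ_I)) ⊆ L(R1(A, Δ_G', Δ_I')). -/
/-- R1 is monotone: if ΔG ≤ ΔG' and ΔI ≤ ΔI' componentwise, then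
L(R1(A, ΔG, ΔI)) ⊆ L(R1(A, ΔG', ΔI')). -/
theorem r1_monotone {Act : Type} (Obs : Act → Prop)
    (S : TAStruct Act) (B : Bounds S)
    (ΔG ΔG' : S.Edge → S.Clock → ℕ) (ΔI ΔI' : S.Loc → S.Clock → ℕ)
    (hG : ∀ e x, ΔG e x ≤ ΔG' e x) (hI : ∀ l x, ΔI l x ≤ ΔI' l x) :
    TALanguage S (R1 B ΔG ΔI) Obs ⊆ TALanguage S (R1 B ΔG' ΔI') Obs := by
  have hstep : ∀ s lab s', Step S (R1 B ΔG ΔI) s lab s' → Step S (R1 B ΔG' ΔI') s lab s' := by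
    intro s lab s' h
    cases h with
    | delay l u d hd hinv =>
        refine Step.delay l u d hd ?_
        intro d' h0 hd' x
        calc u x + d' ≤ ((R1 B ΔG ΔI).inv l x : ℝ) := hinv d' h0 hd' x
          _ ≤ _ := by
            simp only [R1]
            exact_mod_cast Nat.add_le_add_left (hI l x) _
    | disc e u hg hsrc htgt =>
        refine Step.disc e u ?_ ?_ ?_
        · intro x
          calc ((R1 B ΔG' ΔI').guard e x : ℝ) ≤ ((R1 B ΔG ΔI).guard e x : ℝ) := by
                simp only [R1]
                exact_mod_cast Nat.sub_le_sub_left (hG e x) _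
            _ ≤ u x := hg x
        · intro x
          calc u x ≤ ((R1 B ΔG ΔI).inv (S.src e) x : ℝ) := hsrc x
            _ ≤ _ := by
              simp only [R1]
              exact_mod_cast Nat.add_le_add_left (hI _ x) _
        · intro x
          calc (if S.reset e x then 0 else u x) ≤ ((R1 B ΔG ΔI).inv (S.tgt e) x : ℝ) := htgt x
            _ ≤ _ := by
              simp only [R1]
              exact_mod_cast Nat.add_le_add_left (hI _ x) _
  rintro ⟨σ, τ⟩ ⟨hmono, hdiv, s, lab, h0, hs, hf⟩
  exact ⟨hmono, hdiv, s, lab, h0, fun i => hstep _ _ _ (hs i), hf⟩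
end
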